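/- Let X_1, X_2, ... be i.i.d. complex random variables with distribution μ, let μ̄ be the pushforward of μ under z ↦ |z|, and suppose R > 0 satisfies ∫ log_-|x - R| dμ̄(x) < ∞. Define M_n(R) = sup_{|z|=R} |Σ_{k=1}^n 1/(z - X_k)|. Then almost surely limsup_{n→∞} (1/n) log M_n(R) ≤ 0. -/

import Mathlib

/-!
For `‖z‖ = R` one has `‖z - X_k‖ ≥ |‖X_k‖ - R|`, so `M_n(R) ≤ ∑_{k<n} |‖X_k‖ - R|⁻¹`.
Since the `X_n` all have law `μ`, the moment condition gives
`∑_n P(log_- |‖X_n‖ - R| ≥ ε (n + 1)) ≤ ε⁻¹ ∫ log_- |x - R| dμ̄ < ∞`,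
so by Borel–Cantelli almost surely `|‖X_n‖ - R|⁻¹ ≤ e^{ε (n + 1)}` for all large `n`.
Then `M_n(R) ≤ C n e^{ε n}` and `limsup (1/n) log M_n(R) ≤ ε`; intersect over `ε = 1/(m+1)`.
-/

open MeasureTheory Filter

/-- `log_- t`: equals `|log t|` for `0 < t ≤ 1`, `0` for `t ≥ 1`, and `+∞` at `t = 0`. -/
noncomputable def logMinus (t : ℝ) : ENNReal :=
  if t = 0 then ⊤ else ENNReal.ofReal (max (-Real.log t) 0)

open scoped ENNReal Topology
open Finset Real

lemma measurable_logMinus : Measurable logMinus :=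
  Measurable.ite measurableSet_eq measurable_const
    (Real.measurable_log.neg.max measurable_const).ennreal_ofReal

lemma ne_zero_of_logMinus_ne_top {t : ℝ} (h : logMinus t ≠ ⊤) : t ≠ 0 := by
  rintro rfl
  simp [logMinus] at h

lemma inv_le_exp_of_logMinus_le {t c : ℝ} (ht : 0 < t) (hc : 0 ≤ c)
    (h : logMinus t ≤ ENNReal.ofReal c) : t⁻¹ ≤ exp c := by
  rw [logMinus, if_neg ht.ne', ENNReal.ofReal_le_ofReal_iff hc] at h
  rw [← log_le_iff_le_exp (inv_pos.2 ht), log_inv]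
  exact (le_max_left _ _).trans h

lemma sum_range_ite_le_min (t : ℝ≥0∞) (m : ℕ) :
    ∑ n ∈ range m, (if (n + 1 : ℝ≥0∞) ≤ t then 1 else 0) ≤ min (m : ℝ≥0∞) t := by
  induction m with
  | zero => simp
  | succ m ih =>
    rw [sum_range_succ, Nat.cast_succ]
    split_ifs with h
    · rw [min_eq_left h]
      exact add_le_add (ih.trans (min_le_left _ _)) le_rfl
    · exact (add_zero _).trans_le (ih.trans (min_le_min_right _ le_self_add))

lemma tsum_ite_le (t : ℝ≥0∞) : ∑' n : ℕ, (if (n + 1 : ℝ≥0∞) ≤ t then 1 else 0) ≤ t :=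
  ENNReal.tsum_le_of_sum_range_le fun m => (sum_range_ite_le_min t m).trans (min_le_right _ _)

lemma tsum_measure_le_lintegral {α : Type*} [MeasurableSpace α] (μ : Measure α)
    {f : α → ℝ≥0∞} (hf : Measurable f) : ∑' n : ℕ, μ {x | (n + 1 : ℝ≥0∞) ≤ f x} ≤ ∫⁻ x, f x ∂μ := by
  have hmeas (n : ℕ) : MeasurableSet {x | (n + 1 : ℝ≥0∞) ≤ f x} := hf measurableSet_Ici
  calc ∑' n : ℕ, μ {x | (n + 1 : ℝ≥0∞) ≤ f x}
      = ∫⁻ x, ∑' n : ℕ, {x | (n + 1 : ℝ≥0∞) ≤ f x}.indicator 1 x ∂μ := by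
        rw [lintegral_tsum fun n => (measurable_one.indicator (hmeas n)).aemeasurable]
        exact tsum_congr fun n => (lintegral_indicator_one (hmeas n)).symm
    _ ≤ ∫⁻ x, f x ∂μ := lintegral_mono fun x => by
        simpa only [Set.indicator_apply, Set.mem_ofPred_eq, Pi.one_apply] using
          tsum_ite_le (f x)

section IdenticallyDistributed

variable {Ω α : Type*} [MeasurableSpace Ω] [MeasurableSpace α] {P : Measure Ω} {ν : Measure α}
  {Y : ℕ → Ω → α} {f : α → ℝ≥0∞}

lemma ae_forall_ne_top_of_lintegral_ne_top (hY : ∀ n, Measurable (Y n))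
    (hlaw : ∀ n, P.map (Y n) = ν) (hf : Measurable f) (hfin : ∫⁻ x, f x ∂ν ≠ ⊤) :
    ∀ᵐ ω ∂P, ∀ n, f (Y n ω) ≠ ⊤ :=
  ae_all_iff.2 fun n =>
    (ae_map_iff (hY n).aemeasurable (hf (measurableSet_singleton ⊤)).compl).1
      (hlaw n ▸ (ae_lt_top hf hfin).mono fun _ => LT.lt.ne)

lemma ae_eventually_lt_mul_of_lintegral_ne_top (hY : ∀ n, Measurable (Y n))
    (hlaw : ∀ n, P.map (Y n) = ν) (hf : Measurable f) (hfin : ∫⁻ x, f x ∂ν ≠ ⊤) {c : ℝ≥0∞}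
    (hc₀ : c ≠ 0) (hc : c ≠ ⊤) : ∀ᵐ ω ∂P, ∀ᶠ n in atTop, f (Y n ω) < c * (n + 1) := by
  have hset (n : ℕ) : {x | c * (n + 1) ≤ f x} = {x | (n + 1 : ℝ≥0∞) ≤ f x / c} := by
    ext x
    rw [Set.mem_ofPred_eq, Set.mem_ofPred_eq,
      ENNReal.le_div_iff_mul_le (Or.inl hc₀) (Or.inl hc), mul_comm]
  have hsum : ∑' n : ℕ, P {ω | c * (n + 1) ≤ f (Y n ω)} ≠ ⊤ := by
    have hP (n : ℕ) :
        P {ω | c * (n + 1) ≤ f (Y n ω)} = ν {x | (n + 1 : ℝ≥0∞) ≤ f x / c} := by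
      rw [← hset, ← hlaw n,
        Measure.map_apply (hY n) (measurableSet_le measurable_const hf)]
      rfl
    simp_rw [hP]
    refine ne_top_of_le_ne_top ?_ (tsum_measure_le_lintegral ν (hf.div_const c))
    simp_rw [div_eq_mul_inv]
    rw [lintegral_mul_const _ hf]
    exact ENNReal.mul_ne_top hfin (ENNReal.inv_ne_top.2 hc₀)
  exact (ae_eventually_notMem hsum).mono fun ω hω => hω.mono fun n hn => not_le.1 hn

end IdenticallyDistributed

lemma limsup_le_of_forall_eventually_le_add {ι : Type*} {l : Filter ι} {u : ι → ℝ} {L : ℝ}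
    (hL : 0 ≤ L) (h : ∀ δ > 0, ∀ᶠ i in l, u i ≤ L + δ) : limsup u l ≤ L := by
  rw [limsup_eq]
  by_cases hbdd : BddBelow {a | ∀ᶠ i in l, u i ≤ a}
  · exact le_of_forall_pos_le_add fun δ hδ => csInf_le hbdd (h δ hδ)
  · -- junk value: the infimum of a set of reals unbounded below is `0`
    rwa [Real.sInf_of_not_bddBelow hbdd]

lemma limsup_log_div_le_of_le_mul_exp {u : ℕ → ℝ} {C ε : ℝ} (hC : 1 ≤ C) (hε : 0 ≤ ε)
    (hu₀ : ∀ n, 0 ≤ u n) (hu : ∀ᶠ n in atTop, u n ≤ C * n * exp (ε * n)) :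
    limsup (fun n : ℕ => (1 / n : ℝ) * log (u n)) atTop ≤ ε := by
  have hv : Tendsto (fun n : ℕ => (log C + log n) / n) atTop (𝓝 0) := by
    simpa only [add_div, add_zero, Function.comp_def, id] using
      (tendsto_const_div_atTop_nhds_zero_nat (log C)).add
        (isLittleO_log_id_atTop.tendsto_div_nhds_zero.comp tendsto_natCast_atTop_atTop)
  refine limsup_le_of_forall_eventually_le_add hε fun δ hδ => ?_
  filter_upwards [hu, hv.eventually (gt_mem_nhds hδ), eventually_ge_atTop 1] with n hun hvn hn
  have hn' : (1 : ℝ) ≤ n := by exact_mod_cast hn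
  have hlog : log (u n) ≤ log C + log n + ε * n := by
    rcases (hu₀ n).eq_or_lt with h0 | h0
    · rw [← h0, log_zero]
      have := log_nonneg hC
      have := log_nonneg hn'
      positivity
    · calc log (u n) ≤ log (C * n * exp (ε * n)) := log_le_log h0 hun
        _ = log C + log n + ε * n := by
          rw [log_mul (by positivity) (exp_ne_zero _), log_mul (by positivity) (by positivity),
            log_exp]
  calc (1 / n : ℝ) * log (u n) ≤ (1 / n : ℝ) * (log C + log n + ε * n) := by gcongr
    _ = (log C + log n) / n + ε := by field_simp
    _ ≤ ε + δ := by linarith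

lemma exists_sum_range_le_mul_exp {a : ℕ → ℝ} {ε : ℝ} (hε : 0 ≤ ε)
    (ha : ∀ᶠ k in atTop, a k ≤ exp (ε * (k + 1))) :
    ∃ C, 1 ≤ C ∧ ∀ᶠ n in atTop, ∑ k ∈ range n, a k ≤ C * n * exp (ε * n) := by
  obtain ⟨N, hN⟩ := eventually_atTop.1 ha
  obtain ⟨S, hS⟩ : ∃ S, ∑ k ∈ range N, a k = S := ⟨_, rfl⟩
  refine ⟨|S| + 1, by linarith [abs_nonneg S], ?_⟩
  filter_upwards [eventually_ge_atTop (max N 1)] with n hn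
  have hNn : N ≤ n := le_of_max_le_left hn
  have hn' : (1 : ℝ) ≤ n := by exact_mod_cast le_of_max_le_right hn
  have htail : ∑ k ∈ Ico N n, a k ≤ n * exp (ε * n) := calc
    ∑ k ∈ Ico N n, a k ≤ ∑ _k ∈ Ico N n, exp (ε * n) := sum_le_sum fun k hk => by
        have hk' : (k : ℝ) + 1 ≤ n := by exact_mod_cast (mem_Ico.1 hk).2
        exact (hN k (mem_Ico.1 hk).1).trans (exp_le_exp.2 (by nlinarith))
    _ ≤ n * exp (ε * n) := by
        rw [sum_const, nsmul_eq_mul, Nat.card_Ico]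
        gcongr
        exact_mod_cast Nat.sub_le n N
  have hgrowth : 1 ≤ n * exp (ε * n) :=
    one_le_mul_of_one_le_of_one_le hn' (one_le_exp (by positivity))
  rw [← sum_range_add_sum_Ico a hNn, hS]
  nlinarith [le_abs_self S, mul_le_mul_of_nonneg_left hgrowth (abs_nonneg S)]

lemma norm_inv_sub_le_inv_abs_norm_sub {𝕜 : Type*} [NormedDivisionRing 𝕜] {z x : 𝕜} {R : ℝ}
    (hz : ‖z‖ = R) (hx : ‖x‖ ≠ R) : ‖(z - x)⁻¹‖ ≤ |‖x‖ - R|⁻¹ := by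
  subst hz
  rw [norm_inv, ← norm_sub_rev]
  exact inv_anti₀ (abs_pos.2 (sub_ne_zero.2 hx)) (abs_norm_sub_norm_le x z)

lemma iSup_sphere_norm_sum_inv_sub_le {ι 𝕜 : Type*} [NormedDivisionRing 𝕜] {R : ℝ}
    (s : Finset ι) {x : ι → 𝕜} (hx : ∀ k ∈ s, ‖x k‖ ≠ R) :
    ⨆ z : Metric.sphere (0 : 𝕜) R, ‖∑ k ∈ s, ((z : 𝕜) - x k)⁻¹‖ ≤ ∑ k ∈ s, |‖x k‖ - R|⁻¹ :=
  Real.iSup_le (fun z => (norm_sum_le _ _).trans <| sum_le_sum fun k hk =>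
      norm_inv_sub_le_inv_abs_norm_sub (mem_sphere_zero_iff_norm.1 z.2) (hx k hk))
    (sum_nonneg fun _ _ => inv_nonneg.2 (abs_nonneg _))

lemma limsup_log_iSup_sphere_le {𝕜 : Type*} [NormedDivisionRing 𝕜] {x : ℕ → 𝕜} {R ε : ℝ}
    (hε : 0 ≤ ε) (hx : ∀ k, ‖x k‖ ≠ R)
    (hev : ∀ᶠ k in atTop, |‖x k‖ - R|⁻¹ ≤ exp (ε * (k + 1))) :
    limsup (fun n : ℕ => (1 / n : ℝ) *
      log (⨆ z : Metric.sphere (0 : 𝕜) R, ‖∑ k ∈ range n, ((z : 𝕜) - x k)⁻¹‖)) atTop ≤ ε := by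
  obtain ⟨C, hC, hsum⟩ := exists_sum_range_le_mul_exp hε hev
  exact limsup_log_div_le_of_le_mul_exp hC hε (fun n => Real.iSup_nonneg fun _ => norm_nonneg _)
    (hsum.mono fun n hn => (iSup_sphere_norm_sum_inv_sub_le _ fun k _ => hx k).trans hn)

theorem limsup_log_Mn_le_zero_general {Ω : Type*} [MeasurableSpace Ω] (P : Measure Ω)
    (μ : Measure ℂ) (X : ℕ → Ω → ℂ)
    (hmeas : ∀ n, Measurable (X n))
    (hdist : ∀ n, Measure.map (X n) P = μ)
    (R : ℝ)
    (hfin : ∫⁻ x, logMinus |x - R| ∂(Measure.map (fun z : ℂ => ‖z‖) μ) < ⊤) :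
    ∀ᵐ ω ∂P, Filter.limsup
      (fun n : ℕ => (1 / n : ℝ) *
        Real.log (⨆ z : Metric.sphere (0 : ℂ) R,
          ‖∑ k ∈ Finset.range n, ((z : ℂ) - X k ω)⁻¹‖))
      atTop ≤ 0 := by
  have hnorm (n : ℕ) : Measurable fun ω => ‖X n ω‖ := (hmeas n).norm
  have hlaw (n : ℕ) : P.map (fun ω => ‖X n ω‖) = μ.map (‖·‖) := by
    rw [← hdist n, Measure.map_map measurable_norm (hmeas n)]
    rfl
  have hf : Measurable fun x : ℝ => logMinus |x - R| :=
    measurable_logMinus.comp (measurable_id.sub_const R).abs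
  have hoff : ∀ᵐ ω ∂P, ∀ k, ‖X k ω‖ ≠ R := by
    filter_upwards [ae_forall_ne_top_of_lintegral_ne_top hnorm hlaw hf hfin.ne] with ω hω k
    exact sub_ne_zero.1 (abs_ne_zero.1 (ne_zero_of_logMinus_ne_top (hω k)))
  have hε (m : ℕ) : ∀ᵐ ω ∂P, limsup (fun n : ℕ => (1 / n : ℝ) *
      log (⨆ z : Metric.sphere (0 : ℂ) R, ‖∑ k ∈ range n, ((z : ℂ) - X k ω)⁻¹‖)) atTop
      ≤ 1 / (m + 1) := by
    have hpos : (0 : ℝ) < 1 / (m + 1) := by positivity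
    filter_upwards [hoff, ae_eventually_lt_mul_of_lintegral_ne_top hnorm hlaw hf hfin.ne
      (ENNReal.ofReal_pos.2 hpos).ne' ENNReal.ofReal_ne_top] with ω hω hev
    refine limsup_log_iSup_sphere_le hpos.le hω (hev.mono fun k hk => ?_)
    refine inv_le_exp_of_logMinus_le (abs_pos.2 (sub_ne_zero.2 (hω k))) (by positivity) ?_
    rw [ENNReal.ofReal_mul hpos.le]
    exact_mod_cast hk.le
  filter_upwards [ae_all_iff.2 hε] with ω hω
  exact ge_of_tendsto' tendsto_one_div_add_atTop_nhds_zero_nat hω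

/-- If `X_1, X_2, …` are i.i.d. with law `μ`, `μ̄` is the radial part of `μ`, and
`∫ log_-|x - R| dμ̄(x) < ∞`, then almost surely
`limsup (1/n) log M_n(R) ≤ 0`, where `M_n(R) = sup_{|z|=R} |Σ_{k=1}^n 1/(z - X_k)|`. -/
theorem limsup_log_Mn_le_zero {Ω : Type*} [MeasurableSpace Ω] (P : Measure Ω)
    [IsProbabilityMeasure P] (μ : Measure ℂ) [IsProbabilityMeasure μ] (X : ℕ → Ω → ℂ)
    (hmeas : ∀ n, Measurable (X n))
    (hind : ProbabilityTheory.iIndepFun X P)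
    (hdist : ∀ n, Measure.map (X n) P = μ)
    (R : ℝ) (hR : 0 < R)
    (hfin : ∫⁻ x, logMinus |x - R| ∂(Measure.map (fun z : ℂ => ‖z‖) μ) < ⊤) :
    ∀ᵐ ω ∂P, Filter.limsup
      (fun n : ℕ => (1 / n : ℝ) *
        Real.log (⨆ z : Metric.sphere (0 : ℂ) R,
          ‖∑ k ∈ Finset.range n, ((z : ℂ) - X k ω)⁻¹‖))
      atTop ≤ 0 :=
  limsup_log_Mn_le_zero_general P μ X hmeas hdist R hfin
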